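/- Let m ≥ 1, n ≥ 2, and let σ be an independent set of C_{m,n} with π(σ) ≠ ∅. (i) If j is a free even position of one of the intervals of σ, then the independent set σ ∪ {(1,j)} has the same closure as σ (i.e. σ ∪ {(1,j)} ∼ σ), π_o(σ ∪ {(1,j)}) = π_o(σ), and π_e(σ ∪ {(1,j)}) = π_e(σ) ∪ {j}. (ii) If σ has at least two intervals (i.e. |π(σ)| ≥ 2) and x ∈ π_e(σ), then σ ∖ {(1,x)} has the same closure as σ (i.e. σ ∖ {(1,x)} ∼ σ), π_o(σ ∖ {(1,x)}) = π_o(σ), and π_e(σ ∖ {(1,x)}) = π_e(σ) ∖ {x}. -/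

import Mathlib

/-- Adjacency in the cylinder graph: vertices are pairs (row, column) with
rows in {1,…,m} (enforced separately) and columns in ℤ/nℤ.  Two distinct
vertices are adjacent iff they are in the same row and their columns differ
by ±1 in ℤ/nℤ, or they are in the same column and their rows differ by 1. -/
def cylAdj (n : ℕ) (v w : ℕ × ZMod n) : Prop :=
  v ≠ w ∧ ((v.1 = w.1 ∧ (w.2 = v.2 + 1 ∨ v.2 = w.2 + 1)) ∨
    (v.2 = w.2 ∧ (v.1 + 1 = w.1 ∨ w.1 + 1 = v.1)))

/-- `σ` is an independent set of the cylinder graph `C_{m,n}`: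
its vertices lie in {1,…,m} × ℤ/nℤ and no two of them are adjacent. -/
def cylIndep (m n : ℕ) (σ : Finset (ℕ × ZMod n)) : Prop :=
  (∀ v ∈ σ, 1 ≤ v.1 ∧ v.1 ≤ m) ∧ ∀ v ∈ σ, ∀ w ∈ σ, ¬ cylAdj n v w

/-- Partition function of the hard square model at activity −1 on `C_{m,n}`:
`Z(C_{m,n}) = Σ_σ (−1)^{|σ|}` over all independent sets `σ`. -/
noncomputable def Zcyl (m n : ℕ) : ℤ :=
  ∑ᶠ σ ∈ {σ : Finset (ℕ × ZMod n) | cylIndep m n σ}, (-1 : ℤ) ^ σ.card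

/-- `π(σ)`: the set of columns `j ∈ ℤ/nℤ` such that `(1,j) ∈ σ`. -/
def piRow (n : ℕ) (σ : Finset (ℕ × ZMod n)) : Finset (ZMod n) :=
  (σ.filter fun v => v.1 = 1).image Prod.snd

/-- For a set `P ⊆ ℤ/nℤ` of columns, `cOffset n P j` is the least `r ≥ 1`
with `j − r ∈ P` (and `0` if no such `r` exists, i.e. if `P = ∅`).
For `j` a position of an interval of `P` this is the offset `r` of `j` in its
interval (so `j` is an even position iff `cOffset n P j` is positive and even);
for `x ∈ P` it is the length of the interval ending at `x`, i.e. the cyclic gap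
from the previous element of `P` to `x`. -/
noncomputable def cOffset (n : ℕ) (P : Finset (ZMod n)) (j : ZMod n) : ℕ :=
  sInf {r : ℕ | 0 < r ∧ j - (r : ZMod n) ∈ P}

/-- `π_e`: the elements of `P` sitting in even position of their interval. -/
noncomputable def piE (n : ℕ) (P : Finset (ZMod n)) : Finset (ZMod n) :=
  P.filter fun x => 0 < cOffset n P x ∧ Even (cOffset n P x)

/-- `π_o`: the elements of `P` sitting in odd position of their interval. -/
noncomputable def piO (n : ℕ) (P : Finset (ZMod n)) : Finset (ZMod n) :=
  P.filter fun x => Odd (cOffset n P x)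

/-- The column `j` is free in `σ`: `(1,j) ∉ σ` and `σ ∪ {(1,j)}` is independent. -/
def freeCol (m n : ℕ) (σ : Finset (ℕ × ZMod n)) (j : ZMod n) : Prop :=
  ((1 : ℕ), j) ∉ σ ∧ cylIndep m n (insert ((1 : ℕ), j) σ)

/-- The closure `σ̂` of `σ`: `σ` together with all `(1,j)` where `j` is a free
even position of one of the intervals of `σ` (if `π(σ) = ∅` nothing is added,
since then `cOffset` vanishes identically). -/
def clo (m n : ℕ) (σ : Finset (ℕ × ZMod n)) : Set (ℕ × ZMod n) :=
  ↑σ ∪ {v | v.1 = 1 ∧ 0 < cOffset n (piRow n σ) v.2 ∧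
    Even (cOffset n (piRow n σ) v.2) ∧ freeCol m n σ v.2}

/-- The equivalence class `X_σ` of `σ`: all independent sets with the same closure. -/
def Xclass (m n : ℕ) (σ : Finset (ℕ × ZMod n)) : Set (Finset (ℕ × ZMod n)) :=
  {τ | cylIndep m n τ ∧ clo m n τ = clo m n σ}

/-! Inserting a free column `j` at an even position `d` of its interval splits that interval in
two: the positions after `j` get offset `r` instead of `r + d`. As `d` is even, no offset changes
parity, so `π_o`, `π_e ∖ {j}` and the even free positions stay the same: the neighbours `j ± 1`
sit at odd positions, so inserting `(1, j)` does not block any of the latter. Part (ii) is part (i)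
read backwards, applied to `σ ∖ {(1, x)}`. -/

section Cylinder

variable {m n : ℕ}

lemma cylAdj_symm {v w : ℕ × ZMod n} (h : cylAdj n v w) : cylAdj n w v := by
  obtain ⟨hne, ⟨h1, h2⟩ | ⟨h1, h2⟩⟩ := h
  · exact ⟨hne.symm, Or.inl ⟨h1.symm, h2.symm⟩⟩
  · exact ⟨hne.symm, Or.inr ⟨h1.symm, h2.symm⟩⟩

lemma not_cylAdj_one_one {y j : ZMod n} (h₁ : y ≠ j + 1) (h₂ : j ≠ y + 1) :
    ¬ cylAdj n ((1 : ℕ), y) ((1 : ℕ), j) := by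
  rintro ⟨-, ⟨-, h | h⟩ | ⟨-, h | h⟩⟩ <;> simp_all

lemma cylIndep.mono {σ τ : Finset (ℕ × ZMod n)} (h : cylIndep m n σ) (hτ : τ ⊆ σ) :
    cylIndep m n τ :=
  ⟨fun v hv => h.1 v (hτ hv), fun v hv w hw => h.2 v (hτ hv) w (hτ hw)⟩

lemma cylIndep_insert_iff {σ : Finset (ℕ × ZMod n)} {v : ℕ × ZMod n} :
    cylIndep m n (insert v σ) ↔
      (1 ≤ v.1 ∧ v.1 ≤ m) ∧ (∀ w ∈ σ, ¬ cylAdj n v w) ∧ cylIndep m n σ := by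
  constructor
  · intro h
    exact ⟨h.1 v (Finset.mem_insert_self v σ),
      fun w hw => h.2 v (Finset.mem_insert_self v σ) w (Finset.mem_insert_of_mem hw),
      h.mono (Finset.subset_insert v σ)⟩
  · rintro ⟨hv, hvσ, hσ⟩
    refine ⟨(Finset.forall_mem_insert _ _ _).2 ⟨hv, hσ.1⟩, fun a ha b hb => ?_⟩
    rcases Finset.mem_insert.1 ha with rfl | ha' <;> rcases Finset.mem_insert.1 hb with rfl | hb'
    · exact fun h => h.1 rfl
    · exact hvσ b hb'
    · exact fun h => hvσ a ha' (cylAdj_symm h)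
    · exact hσ.2 a ha' b hb'

lemma freeCol.anti {σ τ : Finset (ℕ × ZMod n)} {y : ZMod n} (h : freeCol m n σ y)
    (hτ : τ ⊆ σ) : freeCol m n τ y :=
  ⟨fun hy => h.1 (hτ hy), h.2.mono (Finset.insert_subset_insert _ hτ)⟩

lemma freeCol_insert {σ : Finset (ℕ × ZMod n)} {j y : ZMod n}
    (hj : freeCol m n σ j) (hy : freeCol m n σ y)
    (hyj : y ≠ j) (h₁ : y ≠ j + 1) (h₂ : j ≠ y + 1) :
    freeCol m n (insert ((1 : ℕ), j) σ) y := by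
  obtain ⟨hyσ, hy⟩ := hy
  rw [cylIndep_insert_iff] at hy
  refine ⟨by simp [hyj, hyσ], cylIndep_insert_iff.2 ⟨hy.1, ?_, hj.2⟩⟩
  rw [Finset.forall_mem_insert]
  exact ⟨not_cylAdj_one_one h₁ h₂, hy.2.1⟩

lemma mem_piRow {σ : Finset (ℕ × ZMod n)} {j : ZMod n} :
    j ∈ piRow n σ ↔ ((1 : ℕ), j) ∈ σ := by
  simp [piRow]

lemma piRow_insert {σ : Finset (ℕ × ZMod n)} {j : ZMod n} :
    piRow n (insert ((1 : ℕ), j) σ) = insert j (piRow n σ) := by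
  ext; simp [mem_piRow]

lemma piRow_erase {σ : Finset (ℕ × ZMod n)} {x : ZMod n} :
    piRow n (σ.erase ((1 : ℕ), x)) = (piRow n σ).erase x := by
  ext; simp [mem_piRow]

end Cylinder

section Offset

variable {n : ℕ} {P : Finset (ZMod n)} {j y : ZMod n}

lemma sub_notMem_of_lt_cOffset {r : ℕ} (hr : 0 < r) (hlt : r < cOffset n P j) :
    j - (r : ZMod n) ∉ P :=
  fun h => Nat.notMem_of_lt_sInf hlt ⟨hr, h⟩

lemma cOffset_eq_of_forall {d : ℕ} (hd : 0 < d) (hmem : j - (d : ZMod n) ∈ P)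
    (hmin : ∀ r, 0 < r → r < d → j - (r : ZMod n) ∉ P) : cOffset n P j = d :=
  le_antisymm (Nat.sInf_le ⟨hd, hmem⟩)
    (le_csInf ⟨d, hd, hmem⟩ fun r ⟨hr, h⟩ => not_lt.1 fun hlt => hmin r hr hlt h)

lemma cOffset_eq_one (h : j - 1 ∈ P) : cOffset n P j = 1 :=
  cOffset_eq_of_forall one_pos (by simpa using h) fun _ _ _ => by omega

variable [NeZero n]

lemma cOffset_pos_and_sub_mem (hP : P.Nonempty) (j : ZMod n) :
    0 < cOffset n P j ∧ j - (cOffset n P j : ZMod n) ∈ P := by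
  obtain ⟨x, hx⟩ := hP
  -- `r = val (j - x) + n` is positive and satisfies `j - r = x`
  have hne : {r : ℕ | 0 < r ∧ j - (r : ZMod n) ∈ P}.Nonempty :=
    ⟨(j - x).val + n, by have := NeZero.pos n; omega, by simpa using hx⟩
  exact Nat.sInf_mem hne

lemma cOffset_pos (hP : P.Nonempty) (j : ZMod n) : 0 < cOffset n P j :=
  (cOffset_pos_and_sub_mem hP j).1

lemma sub_cOffset_mem (hP : P.Nonempty) (j : ZMod n) : j - (cOffset n P j : ZMod n) ∈ P :=
  (cOffset_pos_and_sub_mem hP j).2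

lemma cOffset_add_one (hP : P.Nonempty) (hj : j ∉ P) :
    cOffset n P (j + 1) = cOffset n P j + 1 := by
  refine cOffset_eq_of_forall (Nat.succ_pos _) (by simpa using sub_cOffset_mem hP j) ?_
  intro r hr hlt
  obtain rfl | hr := eq_or_lt_of_le (Nat.one_le_iff_ne_zero.2 hr.ne')
  · simpa using hj
  · have : j + 1 - (r : ZMod n) = j - ((r - 1 : ℕ) : ZMod n) := by
      rw [Nat.cast_sub hr.le]; ring
    exact this ▸ sub_notMem_of_lt_cOffset (by omega) (by omega)

lemma cOffset_eq_or_eq_cOffset_insert_add (hP : P.Nonempty) (hj : j ∉ P) (y : ZMod n) :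
    cOffset n P y = cOffset n (insert j P) y ∨
      cOffset n P y = cOffset n (insert j P) y + cOffset n P j := by
  set e := cOffset n (insert j P) y
  have hmin : ∀ r, 0 < r → r < e → y - (r : ZMod n) ∉ P := fun r hr hlt h =>
    sub_notMem_of_lt_cOffset hr hlt (Finset.mem_insert_of_mem h)
  have he := cOffset_pos_and_sub_mem (Finset.insert_nonempty j P) y
  rcases Finset.mem_insert.1 he.2 with hye | hye
  · right
    have hsub : y - ((e + cOffset n P j : ℕ) : ZMod n) = j - (cOffset n P j : ZMod n) := by
      rw [← hye]; push_cast; ring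
    refine cOffset_eq_of_forall (by omega) (hsub ▸ sub_cOffset_mem hP j) ?_
    intro r hr hlt h
    rcases lt_trichotomy r e with hre | rfl | hre
    · exact hmin r hr hre h
    · exact hj (hye ▸ h)
    · have : y - (r : ZMod n) = j - ((r - e : ℕ) : ZMod n) := by
        rw [← hye, Nat.cast_sub hre.le]; ring
      exact sub_notMem_of_lt_cOffset (by omega) (by omega) (this ▸ h)
  · exact Or.inl (cOffset_eq_of_forall he.1 hye hmin)

lemma cOffset_insert_self (hP : P.Nonempty) (hj : j ∉ P) :
    cOffset n (insert j P) j = cOffset n P j := by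
  have := cOffset_pos (Finset.insert_nonempty j P) j
  rcases cOffset_eq_or_eq_cOffset_insert_add hP hj j with h | h <;> omega

lemma even_cOffset_insert_iff (hP : P.Nonempty) (hj : j ∉ P) (heven : Even (cOffset n P j))
    (y : ZMod n) : Even (cOffset n (insert j P) y) ↔ Even (cOffset n P y) := by
  rcases cOffset_eq_or_eq_cOffset_insert_add hP hj y with h | h <;>
    simp [h, Nat.even_add, heven]

lemma not_even_cOffset_add_one (hP : P.Nonempty) (hj : j ∉ P) (heven : Even (cOffset n P j)) :
    ¬ Even (cOffset n P (j + 1)) := by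
  simpa [cOffset_add_one hP hj, Nat.even_add_one] using heven

lemma not_even_cOffset_of_add_one_eq (hP : P.Nonempty) (heven : Even (cOffset n P j))
    (hy : y + 1 = j) : ¬ Even (cOffset n P y) := by
  by_cases hyP : y ∈ P
  · rw [cOffset_eq_one (by rwa [← hy, add_sub_cancel_right])] at heven
    exact absurd heven Nat.not_even_one
  · rw [← hy] at heven
    exact fun h => not_even_cOffset_add_one hP hyP h heven

lemma piO_insert (hP : P.Nonempty) (hj : j ∉ P) (heven : Even (cOffset n P j)) :
    piO n (insert j P) = piO n P := by
  ext y
  simp only [piO, Finset.mem_filter, Finset.mem_insert, ← Nat.not_even_iff_odd,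
    even_cOffset_insert_iff hP hj heven]
  constructor
  · rintro ⟨rfl | hy, h⟩
    · exact absurd heven h
    · exact ⟨hy, h⟩
  · exact fun ⟨hy, h⟩ => ⟨Or.inr hy, h⟩

lemma piE_insert (hP : P.Nonempty) (hj : j ∉ P) (heven : Even (cOffset n P j)) :
    piE n (insert j P) = insert j (piE n P) := by
  ext y
  simp only [piE, Finset.mem_filter, Finset.mem_insert, cOffset_pos hP,
    cOffset_pos (Finset.insert_nonempty j P), true_and, even_cOffset_insert_iff hP hj heven]
  constructor
  · rintro ⟨rfl | hy, h⟩
    · exact Or.inl rfl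
    · exact Or.inr ⟨hy, h⟩
  · rintro (rfl | ⟨hy, h⟩)
    · exact ⟨Or.inl rfl, heven⟩
    · exact ⟨Or.inr hy, h⟩

end Offset

lemma clo_insert {m n : ℕ} [NeZero n] {σ : Finset (ℕ × ZMod n)} {j : ZMod n}
    (hP : (piRow n σ).Nonempty) (heven : Even (cOffset n (piRow n σ) j))
    (hfree : freeCol m n σ j) : clo m n (insert ((1 : ℕ), j) σ) = clo m n σ := by
  have hj : j ∉ piRow n σ := fun h => hfree.1 (mem_piRow.1 h)
  ext ⟨a, y⟩
  simp only [clo, Set.mem_union, Finset.coe_insert, Set.mem_insert_iff, Finset.mem_coe,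
    Set.mem_ofPred_eq, piRow_insert, cOffset_pos hP, cOffset_pos (Finset.insert_nonempty _ _),
    true_and, even_cOffset_insert_iff hP hj heven, Prod.mk.injEq]
  constructor
  · rintro ((⟨rfl, rfl⟩ | hv) | ⟨rfl, hy, hfy⟩)
    · exact Or.inr ⟨rfl, heven, hfree⟩
    · exact Or.inl hv
    · exact Or.inr ⟨rfl, hy, hfy.anti (Finset.subset_insert _ _)⟩
  · rintro (hv | ⟨rfl, hy, hfy⟩)
    · exact Or.inl (Or.inr hv)
    · by_cases hyj : y = j
      · exact Or.inl (Or.inl ⟨rfl, hyj⟩)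
      refine Or.inr ⟨rfl, hy, freeCol_insert hfree hfy hyj ?_ ?_⟩
      · rintro rfl
        exact not_even_cOffset_add_one hP hj heven hy
      · exact fun h => not_even_cOffset_of_add_one_eq hP heven h.symm hy

lemma clo_piO_piE_insert {m n : ℕ} [NeZero n] (σ : Finset (ℕ × ZMod n))
    (hP : (piRow n σ).Nonempty) (j : ZMod n) (heven : Even (cOffset n (piRow n σ) j))
    (hfree : freeCol m n σ j) :
    clo m n (insert ((1 : ℕ), j) σ) = clo m n σ ∧
      piO n (piRow n (insert ((1 : ℕ), j) σ)) = piO n (piRow n σ) ∧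
      piE n (piRow n (insert ((1 : ℕ), j) σ)) = insert j (piE n (piRow n σ)) := by
  have hj : j ∉ piRow n σ := fun h => hfree.1 (mem_piRow.1 h)
  rw [piRow_insert]
  exact ⟨clo_insert hP heven hfree, piO_insert hP hj heven, piE_insert hP hj heven⟩

theorem closure_structure_general (m n : ℕ) (hn : 2 ≤ n)
    (σ : Finset (ℕ × ZMod n)) (hσ : cylIndep m n σ) (hπ : (piRow n σ).Nonempty) :
    (∀ j : ZMod n, 0 < cOffset n (piRow n σ) j → Even (cOffset n (piRow n σ) j) →
      freeCol m n σ j →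
        clo m n (insert ((1 : ℕ), j) σ) = clo m n σ ∧
        piO n (piRow n (insert ((1 : ℕ), j) σ)) = piO n (piRow n σ) ∧
        piE n (piRow n (insert ((1 : ℕ), j) σ)) = insert j (piE n (piRow n σ))) ∧
    (2 ≤ (piRow n σ).card → ∀ x ∈ piE n (piRow n σ),
        clo m n (σ.erase ((1 : ℕ), x)) = clo m n σ ∧
        piO n (piRow n (σ.erase ((1 : ℕ), x))) = piO n (piRow n σ) ∧
        piE n (piRow n (σ.erase ((1 : ℕ), x))) = (piE n (piRow n σ)).erase x) := by
  have : NeZero n := ⟨by omega⟩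
  refine ⟨fun j _ => clo_piO_piE_insert σ hπ j, fun hcard x hx => ?_⟩
  obtain ⟨hxπ, -, hxeven⟩ := Finset.mem_filter.1 hx
  set τ := σ.erase ((1 : ℕ), x)
  have hσx : insert ((1 : ℕ), x) τ = σ := Finset.insert_erase (mem_piRow.1 hxπ)
  have hxτ : x ∉ piRow n τ := by simp [τ, piRow_erase]
  have hτ : (piRow n τ).Nonempty := by
    rw [piRow_erase, ← Finset.card_pos, Finset.card_erase_of_mem hxπ]; omega
  have heven : Even (cOffset n (piRow n τ) x) := by
    rwa [← cOffset_insert_self hτ hxτ, ← piRow_insert, hσx]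
  have hfree : freeCol m n τ x := ⟨Finset.notMem_erase _ _, by rw [hσx]; exact hσ⟩
  obtain ⟨hclo, hO, hE⟩ := clo_piO_piE_insert τ hτ x heven hfree
  rw [hσx] at hclo hO hE
  have hxE : x ∉ piE n (piRow n τ) := fun h => hxτ (Finset.mem_filter.1 h).1
  exact ⟨hclo.symm, hO.symm, by rw [hE, Finset.erase_insert hxE]⟩

/-- Let `σ` be an independent set of `C_{m,n}` with `π(σ) ≠ ∅`.
(i) If `j` is a free even position of one of the intervals of `σ`, then
`σ ∪ {(1,j)} ∼ σ`, `π_o(σ ∪ {(1,j)}) = π_o(σ)` and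
`π_e(σ ∪ {(1,j)}) = π_e(σ) ∪ {j}`.
(ii) If `|π(σ)| ≥ 2` and `x ∈ π_e(σ)`, then `σ ∖ {(1,x)} ∼ σ`,
`π_o(σ ∖ {(1,x)}) = π_o(σ)` and `π_e(σ ∖ {(1,x)}) = π_e(σ) ∖ {x}`. -/
theorem closure_structure (m n : ℕ) (hm : 1 ≤ m) (hn : 2 ≤ n)
    (σ : Finset (ℕ × ZMod n)) (hσ : cylIndep m n σ) (hπ : (piRow n σ).Nonempty) :
    (∀ j : ZMod n, 0 < cOffset n (piRow n σ) j → Even (cOffset n (piRow n σ) j) →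
      freeCol m n σ j →
        clo m n (insert ((1 : ℕ), j) σ) = clo m n σ ∧
        piO n (piRow n (insert ((1 : ℕ), j) σ)) = piO n (piRow n σ) ∧
        piE n (piRow n (insert ((1 : ℕ), j) σ)) = insert j (piE n (piRow n σ))) ∧
    (2 ≤ (piRow n σ).card → ∀ x ∈ piE n (piRow n σ),
        clo m n (σ.erase ((1 : ℕ), x)) = clo m n σ ∧
        piO n (piRow n (σ.erase ((1 : ℕ), x))) = piO n (piRow n σ) ∧
        piE n (piRow n (σ.erase ((1 : ℕ), x))) = (piE n (piRow n σ)).erase x) :=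
  closure_structure_general m n hn σ hσ hπ
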